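/- arXiv:2010.08791 — 3 statements merged into one kernel-verified Lean document; each statement's English description precedes it below -/
import Mathlib

section
/- In a structure whose language consists only of equality and unary function symbols closed under composition, if (a₁, a₂, a₃) is a quantifier-free indiscernible sequence and f(a₁) = g(a₂) holds for unary functions f, g, then f(a₁) = f(a₂), f(a₂) = g(a₂), and g(a₂) = g(a₃) all hold; conversely the conjunction of these three implies f(a₁) = g(a₂). -/
theorem qf_indiscernible_unary_functions_general
    {M : Type*} (F : Set (M → M))
    (a : Fin 3 → M)
    (hind2 : ∀ f ∈ F, ∀ g ∈ F, ∀ i j k l : Fin 3, i < j → k < l →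
      ((f (a i) = g (a j)) ↔ (f (a k) = g (a l))))
    (f g : M → M) (hf : f ∈ F) (hg : g ∈ F) :
    f (a 0) = g (a 1) ↔ (f (a 0) = f (a 1) ∧ f (a 1) = g (a 1) ∧ g (a 1) = g (a 2)) := by
  refine ⟨fun h01 => ?_, fun ⟨h0, h1, _⟩ => h0.trans h1⟩
  have h12 : f (a 1) = g (a 2) := (hind2 f hf g hg 0 1 1 2 (by decide) (by decide)).mp h01
  have h02 : f (a 0) = g (a 2) := (hind2 f hf g hg 0 1 0 2 (by decide) (by decide)).mp h01
  have hg12 : g (a 1) = g (a 2) := h01 ▸ h02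
  exact ⟨h02.trans h12.symm, h12.trans hg12.symm, hg12⟩

/-- In a structure whose language consists only of equality and unary function symbols
closed under composition (modelled as a set `F` of unary functions on `M` closed under
composition), if `(a₀, a₁, a₂)` is a quantifier-free indiscernible sequence — so the truth
value of every atomic formula `f(xᵢ) = g(xⱼ)` is the same on all strictly increasing index
pairs, and likewise for one-variable atomic formulas `f(xᵢ) = g(xᵢ)` — and `f (a 0) = g (a 1)`
holds for `f, g ∈ F`, then `f (a 0) = f (a 1)`, `f (a 1) = g (a 1)` and `g (a 1) = g (a 2)`
all hold; conversely the conjunction of these three implies `f (a 0) = g (a 1)`. -/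
theorem qf_indiscernible_unary_functions
    {M : Type*} (F : Set (M → M))
    (hcomp : ∀ f ∈ F, ∀ g ∈ F, (f ∘ g) ∈ F)
    (a : Fin 3 → M)
    (hind2 : ∀ f ∈ F, ∀ g ∈ F, ∀ i j k l : Fin 3, i < j → k < l →
      ((f (a i) = g (a j)) ↔ (f (a k) = g (a l))))
    (hind1 : ∀ f ∈ F, ∀ g ∈ F, ∀ i j : Fin 3,
      ((f (a i) = g (a i)) ↔ (f (a j) = g (a j))))
    (f g : M → M) (hf : f ∈ F) (hg : g ∈ F) :
    f (a 0) = g (a 1) ↔ (f (a 0) = f (a 1) ∧ f (a 1) = g (a 1) ∧ g (a 1) = g (a 2)) :=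
  qf_indiscernible_unary_functions_general F a hind2 f g hf hg
end

section
/- Let M be a structure, φ a formula, and suppose (a_i)_{i∈I} is a sequence indexed by a linear order I that is φ-indiscernible with repetitions (every subsequence with pairwise distinct elements indexed by an increasing tuple is φ-indiscernible) and has only finitely many distinct elements. Then there is i₀ ∈ I such that in the final segment (a_i)_{i>i₀}, every element that occurs at all occurs infinitely often; and consequently (a_i)_{i>i₀} is φ-indiscernible with repetitions if and only if it is order-φ-indiscernible with repetitions (every subsequence with pairwise distinct elements, in any order, is φ-indiscernible). -/
/-! The sets of values `a '' Ioi c` taken on final segments decrease as `c` grows and lie in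
the finite range of `a`, so one of them, `a '' Ioi i₀`, has least cardinality and is then
contained in all of them: every value occurring after `i₀` occurs beyond every bound, hence
infinitely often. Any tuple of values from that tail can therefore be realized again by a
strictly increasing index tuple beyond `i₀`, so on the tail the increasing tuples already see
every configuration of values and the two kinds of indiscernibility coincide. -/

open Set

section FinalSegment

variable {I M : Type*} [LinearOrder I] (a : I → M)

theorem exists_forall_image_Ioi_subset [Nonempty I] (hfin : (range a).Finite) :
    ∃ i₀ : I, ∀ c, a '' Ioi i₀ ⊆ a '' Ioi c := by
  set i₀ := Function.argmin fun c => (a '' Ioi c).ncard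
  refine ⟨i₀, fun c => ?_⟩
  rcases le_total c i₀ with hc | hc
  · exact image_mono (Ioi_subset_Ioi hc)
  · refine (eq_of_subset_of_ncard_le (image_mono (Ioi_subset_Ioi hc)) ?_
      (hfin.subset (image_subset_range a _))).symm.subset
    exact Function.argmin_le (fun c => (a '' Ioi c).ncard) c

theorem infinite_setOf_lt_apply_eq {i₀ i : I} (hi : ∀ c, a i ∈ a '' Ioi c) :
    {j : I | i₀ < j ∧ a j = a i}.Infinite := by
  have : Nonempty I := ⟨i⟩
  refine infinite_of_not_bddAbove fun ⟨b, hb⟩ => ?_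
  obtain ⟨j, hj, hja⟩ := hi (max i₀ b)
  rw [mem_Ioi, max_lt_iff] at hj
  exact (hb ⟨hj.1, hja⟩).not_gt hj.2

theorem exists_strictMono_comp_eq (c : I) {n : ℕ} (v : Fin n → M)
    (hv : ∀ k c, v k ∈ a '' Ioi c) :
    ∃ s : Fin n → I, StrictMono s ∧ (∀ k, c < s k) ∧ a ∘ s = v := by
  induction n generalizing c with
  | zero => exact ⟨Fin.elim0, fun k => k.elim0, fun k => k.elim0, funext fun k => k.elim0⟩
  | succ n ih =>
    obtain ⟨j, hcj, hj⟩ := hv 0 c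
    obtain ⟨s, hs, hjs, hsv⟩ := ih j (Fin.tail v) fun k => hv k.succ
    refine ⟨Fin.cons j s, Fin.strictMono_cons.2 ⟨hjs, hs⟩, fun k => ?_, ?_⟩
    · exact Fin.cases hcj (fun k => hcj.trans (hjs k)) k
    · ext k
      cases k using Fin.cases with
      | zero => exact hj
      | succ k => exact congrFun hsv k

end FinalSegment

theorem indiscernible_with_repetitions_finitely_many_values_general
    {I M : Type*} [LinearOrder I] [Infinite I] {r : ℕ}
    (P : (Fin r → M) → Prop) (a : I → M)
    (hfin : (Set.range a).Finite) :
    ∃ i₀ : I,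
      (∀ i : I, i₀ < i → {j : I | i₀ < j ∧ a j = a i}.Infinite) ∧
      ((∀ s t : Fin r → I, (∀ k, i₀ < s k) → (∀ k, i₀ < t k) →
          StrictMono s → StrictMono t →
          Function.Injective (a ∘ s) → Function.Injective (a ∘ t) →
          (P (a ∘ s) ↔ P (a ∘ t))) ↔
        (∀ s t : Fin r → I, (∀ k, i₀ < s k) → (∀ k, i₀ < t k) →
          Function.Injective (a ∘ s) → Function.Injective (a ∘ t) →
          (P (a ∘ s) ↔ P (a ∘ t)))) := by
  obtain ⟨i₀, hi₀⟩ := exists_forall_image_Ioi_subset a hfin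
  have hcofinal : ∀ i, i₀ < i → ∀ c, a i ∈ a '' Ioi c := fun i hi c => hi₀ c ⟨i, hi, rfl⟩
  refine ⟨i₀, fun i hi => infinite_setOf_lt_apply_eq a (hcofinal i hi), ?_, ?_⟩
  · intro H s t hs ht hinjs hinjt
    obtain ⟨s', hs'mono, hs', hs's⟩ :=
      exists_strictMono_comp_eq a i₀ (a ∘ s) fun k => hcofinal (s k) (hs k)
    obtain ⟨t', ht'mono, ht', ht't⟩ :=
      exists_strictMono_comp_eq a i₀ (a ∘ t) fun k => hcofinal (t k) (ht k)
    have := H s' t' hs' ht' hs'mono ht'mono (hs's ▸ hinjs) (ht't ▸ hinjt)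
    rwa [hs's, ht't] at this
  · exact fun H s t hs ht _ _ => H s t hs ht

/-- Let `(aᵢ)_{i ∈ I}` be a sequence in `M` indexed by an infinite linear order `I`, which
is φ-indiscernible with repetitions (for an `r`-ary condition `P` playing the role of the
formula φ: any two strictly increasing index tuples selecting pairwise distinct elements
give the same truth value of `P`) and takes only finitely many distinct values. Then there
is `i₀ ∈ I` such that in the final segment `{i | i₀ < i}` every element that occurs at all
occurs infinitely often; and consequently the tail `(aᵢ)_{i > i₀}` is φ-indiscernible with
repetitions iff it is order-φ-indiscernible with repetitions (any two index tuples, in any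
order, selecting pairwise distinct elements give the same truth value of `P`). -/
theorem indiscernible_with_repetitions_finitely_many_values
    {I M : Type*} [LinearOrder I] [Infinite I] {r : ℕ}
    (P : (Fin r → M) → Prop) (a : I → M)
    (hrep : ∀ s t : Fin r → I, StrictMono s → StrictMono t →
      Function.Injective (a ∘ s) → Function.Injective (a ∘ t) → (P (a ∘ s) ↔ P (a ∘ t)))
    (hfin : (Set.range a).Finite) :
    ∃ i₀ : I,
      (∀ i : I, i₀ < i → {j : I | i₀ < j ∧ a j = a i}.Infinite) ∧
      ((∀ s t : Fin r → I, (∀ k, i₀ < s k) → (∀ k, i₀ < t k) →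
          StrictMono s → StrictMono t →
          Function.Injective (a ∘ s) → Function.Injective (a ∘ t) →
          (P (a ∘ s) ↔ P (a ∘ t))) ↔
        (∀ s t : Fin r → I, (∀ k, i₀ < s k) → (∀ k, i₀ < t k) →
          Function.Injective (a ∘ s) → Function.Injective (a ∘ t) →
          (P (a ∘ s) ↔ P (a ∘ t)))) :=
  indiscernible_with_repetitions_finitely_many_values_general P a hfin
end

section
/- A connected topological space X is compact if and only if for every limit ordinal α, every continuous map from X to the ordinal α equipped with the initial-interval topology (open sets are the initial segments {γ : γ < β} for β ≤ α) has image contained in some initial segment {γ : γ < β} with β < α. Equivalently, X is compact iff X cannot be written as the union of a strictly increasing α-indexed chain of proper open subsets for any limit ordinal α. -/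
/-- The initial-interval topology on a well-ordered linear order (an ordinal): the open
sets are exactly the lower sets, i.e. the initial segments `{γ | γ < β}` for `β ≤ α`
together with the whole order. -/
def initialIntervalTopology (A : Type*) [Preorder A] : TopologicalSpace A where
  IsOpen s := IsLowerSet s
  isOpen_univ := isLowerSet_univ
  isOpen_inter := fun _ _ hs ht => hs.inter ht
  isOpen_sUnion := fun _ hS => isLowerSet_sUnion hS

/-!
A compact space bounds every continuous map `f` into a limit ordinal, since the open sets
`f ⁻¹' Iio b` form an increasing cover, and admits no strictly increasing chain of proper open
sets with union `X`, for the same reason.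

Conversely, if `X` is not compact, take an open cover without finite subcover of least possible
cardinality `κ` and index it by the initial ordinal of `κ`. A proper initial segment of the cover
has fewer than `κ` members, so it cannot cover `X` (else it would have a finite subcover).
Sending a point to the least index of a member containing it is therefore a continuous map into
`κ.ord` whose image is unbounded. Finally an unbounded continuous map `f` gives the chain
`f ⁻¹' Iic b`, `b ∈ range f`.
-/

open Set
open scoped Cardinal

section

variable {X : Type*} [TopologicalSpace X]

theorem continuous_initialIntervalTopology_iff {A : Type*} [Preorder A] {f : X → A} :
    @Continuous X A _ (initialIntervalTopology A) f ↔
      ∀ s : Set A, IsLowerSet s → IsOpen (f ⁻¹' s) :=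
  @continuous_def X A _ (initialIntervalTopology A) f

theorem exists_eq_univ_of_monotone_open_cover [CompactSpace X] {ι : Type*} [Preorder ι]
    [IsDirectedOrder ι] [Nonempty ι] {U : ι → Set X} (hUo : ∀ i, IsOpen (U i))
    (hU : Monotone U) (hcover : ⋃ i, U i = univ) : ∃ i, U i = univ := by
  obtain ⟨i, hi⟩ := isCompact_univ.elim_directed_cover U hUo hcover.ge hU.directed_le
  exact ⟨i, univ_subset_iff.mp hi⟩

theorem CompactSpace.exists_forall_lt [CompactSpace X] {A : Type*} [LinearOrder A] [Nonempty A]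
    [NoMaxOrder A] {f : X → A} (hf : @Continuous X A _ (initialIntervalTopology A) f) :
    ∃ b, ∀ x, f x < b := by
  have hcover : ⋃ b, f ⁻¹' Iio b = univ :=
    eq_univ_of_forall fun x => mem_iUnion.mpr (exists_gt (f x))
  obtain ⟨b, hb⟩ := exists_eq_univ_of_monotone_open_cover
    (fun b => continuous_initialIntervalTopology_iff.mp hf _ (isLowerSet_Iio b))
    (fun _ _ hab => preimage_mono (Iio_subset_Iio hab)) hcover
  exact ⟨b, fun x => hb.ge (mem_univ x)⟩

theorem exists_continuous_mem_of_iUnion_eq_univ {A : Type*} [LinearOrder A] [WellFoundedLT A]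
    {V : A → Set X} (hVo : ∀ a, IsOpen (V a)) (hV : ⋃ a, V a = univ) :
    ∃ f : X → A, @Continuous X A _ (initialIntervalTopology A) f ∧ ∀ x, x ∈ V (f x) := by
  have hne : ∀ x, {a | x ∈ V a}.Nonempty := fun x => mem_iUnion.mp (hV.ge (mem_univ x))
  set f : X → A := fun x => wellFounded_lt.min _ (hne x)
  have hmem : ∀ x, x ∈ V (f x) := fun x => wellFounded_lt.min_mem _ (hne x)
  refine ⟨f, continuous_initialIntervalTopology_iff.mpr fun s hs => ?_, hmem⟩
  have : f ⁻¹' s = ⋃ a ∈ s, V a := by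
    ext x
    simp only [mem_preimage, mem_iUnion, exists_prop]
    exact ⟨fun hx => ⟨f x, hx, hmem x⟩,
      fun ⟨a, ha, hxa⟩ => hs (wellFounded_lt.min_le (s := {a | x ∈ V a}) hxa) ha⟩
  exact this ▸ isOpen_biUnion fun a _ => hVo a

end

section Range

variable {X A : Type*} [LinearOrder A] {f : X → A}

theorem strictMono_preimage_Iic_range : StrictMono fun b : range f => f ⁻¹' Iic (b : A) := by
  rintro ⟨b, hb⟩ ⟨c, x, rfl⟩ hbc
  replace hbc : b < f x := hbc
  exact (ssubset_iff_of_subset (preimage_mono (Iic_subset_Iic.mpr hbc.le))).mpr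
    ⟨x, le_rfl, not_le.mpr hbc⟩

theorem iUnion_preimage_Iic_range : ⋃ b : range f, f ⁻¹' Iic (b : A) = univ :=
  eq_univ_of_forall fun x => mem_iUnion.mpr ⟨⟨f x, mem_range_self x⟩, le_rfl⟩

theorem preimage_Iic_ne_univ_of_unbounded (h : ∀ b, ∃ x, b < f x) (b : A) :
    f ⁻¹' Iic b ≠ univ := by
  obtain ⟨x, hx⟩ := h b
  exact fun hb => hx.not_ge (hb.ge (mem_univ x))

theorem noMaxOrder_range_of_unbounded (h : ∀ b, ∃ x, b < f x) : NoMaxOrder (range f) where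
  exists_gt := fun ⟨b, _⟩ => let ⟨x, hx⟩ := h b; ⟨⟨f x, mem_range_self x⟩, hx⟩

end Range

section Ordinal

variable (X : Type u) [TopologicalSpace X]

def OrdinalMapsBounded : Prop :=
  ∀ (A : Type u) [LinearOrder A] [WellFoundedLT A], Nonempty A → NoMaxOrder A →
    ∀ f : X → A, @Continuous X A _ (initialIntervalTopology A) f → ∃ b, ∀ x, f x < b

def NoOpenChainCover : Prop :=
  ∀ (A : Type u) [LinearOrder A] [WellFoundedLT A], Nonempty A → NoMaxOrder A →
    ∀ U : A → Set X, (∀ a, IsOpen (U a)) → (∀ a, U a ≠ univ) → StrictMono U → ⋃ a, U a ≠ univ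

variable {X}

theorem exists_open_cover_forall_small_ne_univ (hX : ¬CompactSpace X) :
    ∃ (ι : Type u) (U : ι → Set X), Infinite ι ∧ (∀ i, IsOpen (U i)) ∧ ⋃ i, U i = univ ∧
      ∀ s : Set ι, #s < #ι → ⋃ i ∈ s, U i ≠ univ := by
  set P : Cardinal.{u} → Prop := fun c => ∃ (ι : Type u) (U : ι → Set X), #ι = c ∧
    (∀ i, IsOpen (U i)) ∧ ⋃ i, U i = univ ∧ ∀ t : Finset ι, ⋃ i ∈ t, U i ≠ univ
  have hP : ∃ c, P c := by
    rw [← isCompact_univ_iff, isCompact_iff_finite_subcover] at hX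
    push Not at hX
    obtain ⟨ι, U, hUo, hU, hfin⟩ := hX
    exact ⟨#ι, ι, U, rfl, hUo, univ_subset_iff.mp hU,
      fun t ht => hfin t (univ_subset_iff.mpr ht)⟩
  obtain ⟨κ, ⟨ι, U, rfl, hUo, hU, hfin⟩, hmin⟩ := wellFounded_lt.has_min {c | P c} hP
  refine ⟨ι, U, ?_, hUo, hU, fun s hs hsU => ?_⟩
  · by_contra hfinite
    have := fintypeOfNotInfinite hfinite
    exact hfin Finset.univ (by simpa using hU)
  -- `s` is a cover of smaller cardinality, so by minimality it has a finite subcover.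
  have hsmall : ¬P #s := fun hPs => hmin _ hPs hs
  refine hsmall ⟨s, fun i => U i, rfl, fun i => hUo i, by simpa [iUnion_subtype] using hsU,
    fun t ht => hfin (t.map (Function.Embedding.subtype _)) ?_⟩
  simpa [iUnion_subtype] using ht

theorem exists_continuous_unbounded_of_not_compactSpace (hX : ¬CompactSpace X) :
    ∃ κ : Cardinal.{u}, ℵ₀ ≤ κ ∧ ∃ f : X → κ.ord.ToType,
      @Continuous X _ _ (initialIntervalTopology _) f ∧ ∀ b, ∃ x, b ≤ f x := by
  obtain ⟨ι, U, hinf, hUo, hU, hsmall⟩ := exists_open_cover_forall_small_ne_univ hX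
  obtain ⟨e⟩ : Nonempty ((#ι).ord.ToType ≃ ι) := Cardinal.eq.mp (by simp)
  have hV : ⋃ a, U (e a) = univ := by rwa [e.surjective.iUnion_comp]
  obtain ⟨f, hf, hmem⟩ := exists_continuous_mem_of_iUnion_eq_univ (fun a => hUo (e a)) hV
  refine ⟨#ι, Cardinal.infinite_iff.mp hinf, f, hf, fun b => ?_⟩
  by_contra! hlt
  refine hsmall (e '' Iio b) ?_ (eq_univ_of_forall fun x => ?_)
  · simpa [Cardinal.mk_image_eq e.injective] using Cardinal.mk_Iio_lt b
  · exact mem_biUnion (mem_image_of_mem e (hlt x)) (hmem x)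

theorem CompactSpace.ordinalMapsBounded [CompactSpace X] : OrdinalMapsBounded X :=
  fun _ _ _ _ _ _ hf => CompactSpace.exists_forall_lt hf

theorem CompactSpace.noOpenChainCover [CompactSpace X] : NoOpenChainCover X := by
  intro A _ _ _ _ U hUo hU hUm hcover
  obtain ⟨a, ha⟩ := exists_eq_univ_of_monotone_open_cover hUo hUm.monotone hcover
  exact hU a ha

theorem CompactSpace.of_ordinalMapsBounded (h : OrdinalMapsBounded X) : CompactSpace X := by
  by_contra hX
  obtain ⟨κ, hκ, f, hf, hunb⟩ := exists_continuous_unbounded_of_not_compactSpace hX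
  have : Infinite κ.ord.ToType := Cardinal.infinite_iff.mpr (by simpa using hκ)
  obtain ⟨b, hb⟩ := h _ inferInstance (Cardinal.noMaxOrder hκ) f hf
  obtain ⟨x, hx⟩ := hunb b
  exact (hb x).not_ge hx

theorem NoOpenChainCover.ordinalMapsBounded (h : NoOpenChainCover X) : OrdinalMapsBounded X := by
  intro A _ _ hA _ f hf
  by_contra! hbdd
  have hunb : ∀ b, ∃ x, b < f x := fun b =>
    let ⟨c, hc⟩ := exists_gt b
    let ⟨x, hx⟩ := hbdd c
    ⟨x, hc.trans_le hx⟩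
  obtain ⟨a⟩ := hA
  obtain ⟨x, -⟩ := hunb a
  exact h (range f) ⟨⟨f x, mem_range_self x⟩⟩ (noMaxOrder_range_of_unbounded hunb)
    (fun b => f ⁻¹' Iic (b : A))
    (fun b => continuous_initialIntervalTopology_iff.mp hf _ (isLowerSet_Iic _))
    (fun b => preimage_Iic_ne_univ_of_unbounded hunb b) strictMono_preimage_Iic_range
    iUnion_preimage_Iic_range

theorem compactSpace_iff_ordinalMapsBounded : CompactSpace X ↔ OrdinalMapsBounded X :=
  ⟨fun _ => CompactSpace.ordinalMapsBounded, CompactSpace.of_ordinalMapsBounded⟩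

theorem compactSpace_iff_noOpenChainCover : CompactSpace X ↔ NoOpenChainCover X :=
  ⟨fun _ => CompactSpace.noOpenChainCover,
    fun h => CompactSpace.of_ordinalMapsBounded h.ordinalMapsBounded⟩

end Ordinal

theorem compact_iff_ordinal_maps_bounded_general
    {X : Type u} [TopologicalSpace X] :
    (CompactSpace X ↔
      ∀ (A : Type u) [LinearOrder A] [WellFoundedLT A], Nonempty A → NoMaxOrder A →
        ∀ f : X → A, (@Continuous X A _ (initialIntervalTopology A) f) →
          ∃ b : A, ∀ x : X, f x < b) ∧
    (CompactSpace X ↔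
      ∀ (A : Type u) [LinearOrder A] [WellFoundedLT A], Nonempty A → NoMaxOrder A →
        ∀ U : A → Set X, (∀ a, IsOpen (U a)) → (∀ a, U a ≠ Set.univ) →
          StrictMono U → (⋃ a, U a) ≠ Set.univ) :=
  ⟨compactSpace_iff_ordinalMapsBounded, compactSpace_iff_noOpenChainCover⟩

/-- A connected topological space `X` is compact iff for every limit ordinal `α`
(a nonempty well-ordered linear order with no maximal element), every map `X → α`
continuous for the initial-interval topology has image contained in a proper initial
segment `{γ | γ < β}` with `β < α`. Equivalently, `X` is compact iff `X` cannot be written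
as the union of a strictly increasing `α`-indexed chain of proper open subsets for any
limit ordinal `α`. -/
theorem compact_iff_ordinal_maps_bounded
    {X : Type u} [TopologicalSpace X] (hconn : ConnectedSpace X) :
    (CompactSpace X ↔
      ∀ (A : Type u) [LinearOrder A] [WellFoundedLT A], Nonempty A → NoMaxOrder A →
        ∀ f : X → A, (@Continuous X A _ (initialIntervalTopology A) f) →
          ∃ b : A, ∀ x : X, f x < b) ∧
    (CompactSpace X ↔
      ∀ (A : Type u) [LinearOrder A] [WellFoundedLT A], Nonempty A → NoMaxOrder A →
        ∀ U : A → Set X, (∀ a, IsOpen (U a)) → (∀ a, U a ≠ Set.univ) →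
          StrictMono U → (⋃ a, U a) ≠ Set.univ) :=
  compact_iff_ordinal_maps_bounded_general
end
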